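/- arXiv:2511.14320 — 4 statements merged into one kernel-verified Lean document; each statement's English description precedes it below -/
import Mathlib

section
/- Suppose the marginals on X of the probability measures D, P₁,…,P_I, Q₁,…,Q_J are atomless, Φ is a decomposable set of measurable functions X → ℝ^K, and for every φ ∈ Φ the integrands ℓ(φ(x),y), g_i(φ(x),y), h_j(φ(x),y) are integrable with respect to D, P_i, Q_j respectively. Then the cost-constraint epigraph M_φ = {(f, u, v) ∈ ℝ × ℝ^I × ℝ^J : ∃φ∈Φ such that E_D[ℓ(φ(x),y)] = f, E_{P_i}[g_i(φ(x),y)] ≤ u_i for all i = 1,…,I, and E_{Q_j}[h_j(φ(x),y)] = v_j for all j = 1,…,J} is a convex subset of ℝ^{1+I+J}. -/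
/-!
Given points of the epigraph witnessed by `φ₁, φ₂ ∈ Φ` and weights `a + b = 1`, Lyapunov's
convexity theorem, applied to the finitely many signed measures `S ↦ ∫_{S × Y} L (φₘ x) y` on `X`
(`L` one of the losses, `m = 1, 2`), each absolutely continuous with respect to an atomless
`X`-marginal, gives a measurable `Z ⊆ X` carrying the fraction `a` of each of them. The function
equal to `φ₁` on `Z` and to `φ₂` off `Z` lies in `Φ`, and each of its losses is the
`(a, b)`-combination of those of `φ₁` and `φ₂`.

Lyapunov's theorem is proved following Lindenstrauss. For densities `f k ∈ L²(μ)`, the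
`[0, 1]`-valued `g ∈ L²(μ)` with `∫ g f k = a ∫ f k` form a nonempty weak-* compact set, which has
an extreme point by Krein–Milman. An extreme point `g` is an indicator function: if `0 < g < 1` on
a non-null set, atomlessness provides `card κ + 1` disjoint non-null pieces of it, hence a nonzero
step function `w` on them with `w * min g (1 - g)` orthogonal to all `f k`, and `g` is the midpoint
of the admissible `g ± w * min g (1 - g)`.
-/

open MeasureTheory

def MeasureAtomless {α : Type*} [MeasurableSpace α] (μ : Measure α) : Prop :=
  ∀ A : Set α, MeasurableSet A → μ A ≠ 0 →
    ∃ B ⊆ A, MeasurableSet B ∧ μ B ≠ 0 ∧ μ B ≠ μ A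

open Set Function
open scoped Matrix RealInnerProductSpace

theorem extremePoints_setOf_inner_mem_nonempty {E ι : Type*} [NormedAddCommGroup E]
    [InnerProductSpace ℝ E] [CompleteSpace E] (u : ι → E) (C : ι → Set ℝ)
    (hC : ∀ i, IsClosed (C i)) (hb : Bornology.IsBounded {g : E | ∀ i, ⟪u i, g⟫ ∈ C i})
    (hne : {g : E | ∀ i, ⟪u i, g⟫ ∈ C i}.Nonempty) :
    ({g : E | ∀ i, ⟪u i, g⟫ ∈ C i}.extremePoints ℝ).Nonempty := by
  let T : E ≃ₗ[ℝ] WeakDual ℝ E :=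
    (InnerProductSpace.toDual ℝ E).toLinearEquiv.trans StrongDual.toWeakDual
  have hT : T '' {g : E | ∀ i, ⟪u i, g⟫ ∈ C i} =
      ⋂ i, (fun φ : WeakDual ℝ E => φ (u i)) ⁻¹' C i := by
    ext φ
    obtain ⟨g, rfl⟩ := T.surjective φ
    simp [T, real_inner_comm]
  have hcpt : IsCompact (T '' {g : E | ∀ i, ⟪u i, g⟫ ∈ C i}) := by
    refine WeakDual.isCompact_of_bounded_of_closed ?_ ?_
    · exact (InnerProductSpace.toDual ℝ E).lipschitz.isBounded_image hb
    · rw [hT]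
      exact isClosed_iInter fun i => (hC i).preimage (WeakDual.eval_continuous (u i))
  have : LocallyConvexSpace ℝ (WeakDual ℝ E) :=
    WeakBilin.locallyConvexSpace (B := topDualPairing ℝ E)
  obtain ⟨φ, hφ⟩ := hcpt.extremePoints_nonempty (hne.image T)
  rw [← image_extremePoints] at hφ
  obtain ⟨g, hg, -⟩ := hφ
  exact ⟨g, hg⟩

theorem eq_zero_of_mem_extremePoints_of_add_mem_of_sub_mem {E : Type*} [AddCommGroup E]
    [Module ℝ E] {S : Set E} {g h : E} (hg : g ∈ S.extremePoints ℝ) (hadd : g + h ∈ S)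
    (hsub : g - h ∈ S) : h = 0 := by
  simpa using hg.2 hadd hsub (mem_openSegment_add_sub g h)

theorem Matrix.exists_mulVec_eq_zero_of_card_lt {κ ι : Type*} [Fintype κ] [Fintype ι]
    (M : Matrix κ ι ℝ) (h : Fintype.card κ < Fintype.card ι) :
    ∃ d ≠ 0, ‖d‖ ≤ 1 ∧ M *ᵥ d = 0 := by
  have hker : LinearMap.ker M.mulVecLin ≠ ⊥ :=
    LinearMap.ker_ne_bot_of_finrank_lt (by simpa using h)
  obtain ⟨d, hd, hd0⟩ := (Submodule.ne_bot_iff _).1 hker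
  refine ⟨‖d‖⁻¹ • d, smul_ne_zero (inv_ne_zero (norm_ne_zero_iff.2 hd0)) hd0, ?_, ?_⟩
  · rw [norm_smul, norm_inv, norm_norm, inv_mul_cancel₀ (norm_ne_zero_iff.2 hd0)]
  · rw [Matrix.mulVec_smul, show M *ᵥ d = 0 from hd, smul_zero]

section Lyapunov

variable {X : Type*} [MeasurableSpace X] {μ ν : Measure X} {A : Set X}

namespace MeasureAtomless

theorem exists_split_of_le [IsFiniteMeasure μ] (hμ : MeasureAtomless μ) (hle : μ ≤ ν)
    (hA : MeasurableSet A) (hA0 : μ A ≠ 0) :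
    ∃ B ⊆ A, MeasurableSet B ∧ ν B ≠ 0 ∧ ν (A \ B) ≠ 0 := by
  obtain ⟨B, hBA, hB, hB0, hBA'⟩ := hμ A hA hA0
  have hdiff : μ (A \ B) ≠ 0 := fun h => hBA' <| le_antisymm (measure_mono hBA) <| by
    rwa [measure_sdiff hBA hB.nullMeasurableSet (measure_ne_top μ B), tsub_eq_zero_iff_le] at h
  exact ⟨B, hBA, hB, fun h => hB0 (le_zero_iff.1 (h ▸ hle B)),
    fun h => hdiff (le_zero_iff.1 (h ▸ hle _))⟩

theorem of_exists_split [IsFiniteMeasure ν]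
    (h : ∀ A, MeasurableSet A → ν A ≠ 0 → ∃ B ⊆ A, MeasurableSet B ∧ ν B ≠ 0 ∧ ν (A \ B) ≠ 0) :
    MeasureAtomless ν := by
  intro A hA hA0
  obtain ⟨B, hBA, hB, hB0, hdiff⟩ := h A hA hA0
  refine ⟨B, hBA, hB, hB0, fun hBA' => hdiff ?_⟩
  rw [measure_sdiff hBA hB.nullMeasurableSet (measure_ne_top ν B), hBA', tsub_self]

theorem finsetSum {ι : Type*} {s : Finset ι} {μ : ι → Measure X} [∀ i, IsFiniteMeasure (μ i)]
    (hμ : ∀ i ∈ s, MeasureAtomless (μ i)) : MeasureAtomless (∑ i ∈ s, μ i) := by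
  refine of_exists_split fun A hA hA0 => ?_
  obtain ⟨i, hi, hiA⟩ : ∃ i ∈ s, μ i A ≠ 0 := by
    by_contra! h
    exact hA0 (by simp [Measure.finsetSum_apply, Finset.sum_eq_zero h])
  exact (hμ i hi).exists_split_of_le (Finset.single_le_sum (fun j _ => Measure.zero_le _) hi) hA hiA

theorem of_le_of_absolutelyContinuous [IsFiniteMeasure μ] [IsFiniteMeasure ν]
    (hμ : MeasureAtomless μ) (hle : μ ≤ ν) (hνμ : ν ≪ μ) : MeasureAtomless ν :=
  of_exists_split fun _ hA hA0 => hμ.exists_split_of_le hle hA fun h => hA0 (hνμ h)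

theorem exists_pairwise_disjoint [IsFiniteMeasure μ] (hμ : MeasureAtomless μ) (m : ℕ)
    (hA : MeasurableSet A) (hA0 : μ A ≠ 0) :
    ∃ B : Fin m → Set X, (∀ p, B p ⊆ A ∧ MeasurableSet (B p) ∧ μ (B p) ≠ 0) ∧
      Pairwise (Disjoint on B) := by
  induction m generalizing A with
  | zero => exact ⟨Fin.elim0, fun p => p.elim0, fun p => p.elim0⟩
  | succ m ih =>
    obtain ⟨B₀, hB₀A, hB₀, hB₀0, hdiff⟩ := hμ.exists_split_of_le le_rfl hA hA0
    obtain ⟨B, hB, hBdisj⟩ := ih (hA.diff hB₀) hdiff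
    refine ⟨Fin.cons B₀ B, Fin.cases ⟨hB₀A, hB₀, hB₀0⟩ fun p => ?_, ?_⟩
    · rw [pairwise_fin_succ_iff_of_isSymm]
      exact ⟨fun p => disjoint_sdiff_right.mono_right (hB p).1, by simpa [onFun]⟩
    · simpa using ⟨(hB p).1.trans sdiff_subset, (hB p).2⟩

theorem exists_support_subset_integral_mul_eq_zero [IsFiniteMeasure μ] (hμ : MeasureAtomless μ)
    {κ : Type*} [Fintype κ] (f : κ → X → ℝ) (hf : ∀ k, Integrable (f k) μ)
    (hA : MeasurableSet A) (hA0 : μ A ≠ 0) :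
    ∃ c : X → ℝ, Measurable c ∧ (∀ x, |c x| ≤ 1) ∧ support c ⊆ A ∧ μ (support c) ≠ 0 ∧
      ∀ k, ∫ x, c x * f k x ∂μ = 0 := by
  obtain ⟨B, hB, hBdisj⟩ := hμ.exists_pairwise_disjoint (Fintype.card κ + 1) hA hA0
  obtain ⟨d, hd0, hd1, hMd⟩ := Matrix.exists_mulVec_eq_zero_of_card_lt
    (Matrix.of fun k p => ∫ x in B p, f k x ∂μ) (by simp)
  set c : X → ℝ := fun x => ∑ p, (B p).indicator (fun _ => d p) x
  have hc_mem : ∀ p, ∀ x ∈ B p, c x = d p := fun p x hx => by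
    simp only [c]
    rw [Finset.sum_eq_single p (fun q _ hqp => indicator_of_notMem
      (disjoint_left.1 (hBdisj hqp).symm hx) _) (by simp), indicator_of_mem hx]
  have hc_notMem : ∀ x, (∀ p, x ∉ B p) → c x = 0 := fun x hx =>
    Finset.sum_eq_zero fun p _ => indicator_of_notMem (hx p) _
  obtain ⟨p₀, hp₀⟩ := Function.ne_iff.1 hd0
  refine ⟨c, Finset.measurable_sum _ fun p _ => measurable_const.indicator (hB p).2.1,
    fun x => ?_, fun x hx => ?_, ?_, fun k => ?_⟩
  · by_cases hx : ∃ p, x ∈ B p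
    · obtain ⟨p, hp⟩ := hx
      rw [hc_mem p x hp]
      exact (norm_le_pi_norm d p).trans hd1
    · rw [hc_notMem x (not_exists.1 hx), abs_zero]
      exact zero_le_one
  · by_contra hxA
    exact hx (hc_notMem x fun p hp => hxA ((hB p).1 hp))
  · refine fun h => (hB p₀).2.2 (measure_mono_null (fun x hx => ?_) h)
    simpa [mem_support, hc_mem p₀ x hx] using hp₀
  · calc ∫ x, c x * f k x ∂μ = ∫ x, ∑ p, (B p).indicator (fun x => d p * f k x) x ∂μ := by
          congr 1; ext x; simp [c, Finset.sum_mul, indicator_mul_left]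
      _ = ((Matrix.of fun k p => ∫ x in B p, f k x ∂μ) *ᵥ d) k := by
          rw [integral_finsetSum _ fun p _ => ((hf k).const_mul (d p)).indicator (hB p).2.1]
          simp only [Matrix.mulVec, dotProduct, Matrix.of_apply]
          refine Finset.sum_congr rfl fun p _ => ?_
          rw [integral_indicator (hB p).2.1, integral_const_mul, mul_comm]
      _ = 0 := by rw [hMd]; rfl

end MeasureAtomless

theorem ae_mem_Icc_iff_forall_setIntegral_mem [IsFiniteMeasure μ] {f : X → ℝ}
    (hf : Integrable f μ) :
    (∀ᵐ x ∂μ, f x ∈ Icc 0 1) ↔ ∀ s, MeasurableSet s → ∫ x in s, f x ∂μ ∈ Icc 0 (μ.real s) := by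
  constructor
  · intro h s _
    refine ⟨setIntegral_nonneg_of_ae (h.mono fun x hx => hx.1), ?_⟩
    calc ∫ x in s, f x ∂μ ≤ ∫ _ in s, (1 : ℝ) ∂μ :=
          setIntegral_mono_ae hf.integrableOn (integrable_const 1).integrableOn
            (h.mono fun x hx => hx.2)
      _ = μ.real s := by simp
  · intro h
    have h0 := ae_nonneg_of_forall_setIntegral_nonneg hf fun s hs _ => (h s hs).1
    have h1 := ae_le_of_forall_setIntegral_le hf (integrable_const 1) fun s hs _ => by
      simpa using (h s hs).2
    filter_upwards [h0, h1] with x hx0 hx1 using ⟨hx0, hx1⟩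

variable {κ : Type*}

/-- The relaxation of the family of sets `Z` with `∫_Z f k = c k`: its `{0, 1}`-valued members
are their indicators. -/
def relaxedMomentSet (μ : Measure X) (f : κ → X → ℝ) (c : κ → ℝ) : Set (Lp ℝ 2 μ) :=
  {g | (∀ᵐ x ∂μ, g x ∈ Icc 0 1) ∧ ∀ k, ∫ x, g x * f k x ∂μ = c k}

theorem extremePoints_relaxedMomentSet_nonempty [IsFiniteMeasure μ] {f : κ → X → ℝ}
    (hf : ∀ k, MemLp (f k) 2 μ) {c : κ → ℝ} (hne : (relaxedMomentSet μ f c).Nonempty) :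
    ((relaxedMomentSet μ f c).extremePoints ℝ).Nonempty := by
  let u : {s : Set X // MeasurableSet s} ⊕ κ → Lp ℝ 2 μ :=
    Sum.elim (fun s => indicatorConstLp 2 s.2 (measure_ne_top μ s) 1) fun k => (hf k).toLp
  let C : {s : Set X // MeasurableSet s} ⊕ κ → Set ℝ :=
    Sum.elim (fun s => Icc 0 (μ.real s)) fun k => {c k}
  have hS : relaxedMomentSet μ f c = {g | ∀ i, ⟪u i, g⟫ ∈ C i} := by
    ext g
    have hint : ∀ k, ⟪(hf k).toLp, g⟫ = ∫ x, g x * f k x ∂μ := fun k => by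
      rw [L2.inner_def]
      refine integral_congr_ae ?_
      filter_upwards [(hf k).coeFn_toLp] with x hx
      simp [hx]
    simp only [relaxedMomentSet, u, C, Sum.forall, Sum.elim_inl, Sum.elim_inr, Subtype.forall,
      L2.inner_indicatorConstLp_one, hint, mem_singleton_iff, mem_ofPred_eq,
      ae_mem_Icc_iff_forall_setIntegral_mem ((Lp.memLp g).integrable one_le_two)]
  rw [hS] at hne ⊢
  refine extremePoints_setOf_inner_mem_nonempty u C (Sum.rec (fun _ => isClosed_Icc)
    fun _ => isClosed_singleton) ?_ hne
  rw [← hS]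
  refine (Metric.isBounded_closedBall (x := 0)).subset fun g hg => mem_closedBall_zero_iff.2 <|
    Lp.norm_le_of_ae_bound zero_le_one (hg.1.mono fun x hx => ?_)
  rw [Real.norm_of_nonneg hx.1]
  exact hx.2

theorem add_mem_relaxedMomentSet {f : κ → X → ℝ} (hf : ∀ k, Integrable (f k) μ) {c : κ → ℝ}
    {g h : Lp ℝ 2 μ} (hg : g ∈ relaxedMomentSet μ f c)
    (hh : ∀ᵐ x ∂μ, |h x| ≤ min (g x) (1 - g x)) (hhf : ∀ k, ∫ x, h x * f k x ∂μ = 0) :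
    g + h ∈ relaxedMomentSet μ f c := by
  have hg_norm : ∀ᵐ x ∂μ, ‖g x‖ ≤ 1 :=
    hg.1.mono fun x hx => (Real.norm_of_nonneg hx.1).trans_le hx.2
  have hh_norm : ∀ᵐ x ∂μ, ‖h x‖ ≤ 1 :=
    (hh.and hg.1).mono fun x hx => hx.1.trans ((min_le_left _ _).trans hx.2.2)
  have hcoe := Lp.coeFn_add g h
  refine ⟨?_, fun k => ?_⟩
  · filter_upwards [hcoe, hg.1, hh] with x hx hgx hhx
    have h₁ := abs_le.1 (hhx.trans (min_le_left _ _))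
    have h₂ := abs_le.1 (hhx.trans (min_le_right _ _))
    rw [hx, Pi.add_apply]
    constructor <;> linarith
  · rw [integral_congr_ae (hcoe.mono fun x hx => by rw [hx, Pi.add_apply, add_mul]),
      integral_add ((hf k).bdd_mul (Lp.aestronglyMeasurable g) hg_norm)
        ((hf k).bdd_mul (Lp.aestronglyMeasurable h) hh_norm), hhf k, hg.2 k, add_zero]

theorem MeasureAtomless.exists_add_sub_mem_relaxedMomentSet [IsFiniteMeasure μ]
    (hμ : MeasureAtomless μ) [Fintype κ] {f : κ → X → ℝ} (hf : ∀ k, Integrable (f k) μ)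
    {c : κ → ℝ} {g : Lp ℝ 2 μ} (hg : g ∈ relaxedMomentSet μ f c)
    (hA : μ {x | g x ∈ Ioo 0 1} ≠ 0) :
    ∃ h : Lp ℝ 2 μ, h ≠ 0 ∧ g + h ∈ relaxedMomentSet μ f c ∧
      g - h ∈ relaxedMomentSet μ f c := by
  have hgm : Measurable g := (Lp.stronglyMeasurable g).measurable
  set m : X → ℝ := fun x => min (g x) (1 - g x)
  have hm : ∀ᵐ x ∂μ, m x ∈ Icc 0 1 := hg.1.mono fun x hx =>
    ⟨le_min hx.1 (by linarith [hx.2]), (min_le_left _ _).trans hx.2⟩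
  have hmm : Measurable m := hgm.min (measurable_const.sub hgm)
  obtain ⟨w, hwm, hw1, hwA, hw0, hwf⟩ := hμ.exists_support_subset_integral_mul_eq_zero
    (fun k x => m x * f k x)
    (fun k => (hf k).bdd_mul hmm.aestronglyMeasurable
      (hm.mono fun x hx => (Real.norm_of_nonneg hx.1).trans_le hx.2))
    (hgm measurableSet_Ioo) hA
  have hwm_le : ∀ᵐ x ∂μ, |w x * m x| ≤ m x := hm.mono fun x hx => by
    rw [abs_mul, abs_of_nonneg hx.1]
    exact mul_le_of_le_one_left hx.1 (hw1 x)
  have hwm_mem : MemLp (fun x => w x * m x) 2 μ :=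
    .of_bound (hwm.mul hmm).aestronglyMeasurable 1
      ((hwm_le.and hm).mono fun x hx => hx.1.trans hx.2.2)
  obtain ⟨h, hh_coe⟩ : ∃ h : Lp ℝ 2 μ, h =ᵐ[μ] fun x => w x * m x :=
    ⟨_, hwm_mem.coeFn_toLp⟩
  have hh : ∀ᵐ x ∂μ, |h x| ≤ m x := by
    filter_upwards [hh_coe, hwm_le] with x hx hx' using hx ▸ hx'
  have hhf : ∀ k, ∫ x, h x * f k x ∂μ = 0 := fun k => by
    rw [← hwf k]
    refine integral_congr_ae (hh_coe.mono fun x hx => ?_)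
    simp only [hx, mul_assoc]
  refine ⟨h, fun h0 => hw0 (measure_mono_null (t := support fun x => w x * m x) ?_ ?_),
    add_mem_relaxedMomentSet hf hg hh hhf, ?_⟩
  · intro x hx
    exact mul_ne_zero hx (lt_min (hwA hx).1 (sub_pos.2 (hwA hx).2)).ne'
  · exact (Measure.measure_support_eq_zero_iff μ).2
      (hh_coe.symm.trans (Lp.eq_zero_iff_ae_eq_zero.1 h0))
  · rw [sub_eq_add_neg]
    refine add_mem_relaxedMomentSet hf hg ?_ fun k => ?_
    · filter_upwards [Lp.coeFn_neg h, hh] with x hx hx' using by rwa [hx, Pi.neg_apply, abs_neg]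
    · rw [← neg_eq_zero, ← integral_neg, ← hhf k]
      refine integral_congr_ae ((Lp.coeFn_neg h).mono fun x hx => ?_)
      simp only [hx, Pi.neg_apply, neg_mul, neg_neg]

theorem MeasureAtomless.exists_setIntegral_eq_mul_integral [IsFiniteMeasure μ]
    (hμ : MeasureAtomless μ) [Fintype κ] {f : κ → X → ℝ} (hf : ∀ k, MemLp (f k) 2 μ) {a : ℝ}
    (ha : a ∈ Icc 0 1) :
    ∃ Z, MeasurableSet Z ∧ ∀ k, ∫ x in Z, f k x ∂μ = a * ∫ x, f k x ∂μ := by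
  have hconst : (memLp_const a).toLp _ ∈ relaxedMomentSet μ f fun k => a * ∫ x, f k x ∂μ := by
    have hcoe := (memLp_const (μ := μ) (p := 2) a).coeFn_toLp
    refine ⟨hcoe.mono fun x hx => hx ▸ ha, fun k => ?_⟩
    rw [integral_congr_ae (hcoe.mono fun x hx => by rw [hx]), integral_const_mul]
  obtain ⟨g, hg⟩ := extremePoints_relaxedMomentSet_nonempty hf ⟨_, hconst⟩
  have hA : μ {x | g x ∈ Ioo 0 1} = 0 := by
    by_contra hA
    obtain ⟨h, hh0, hadd, hsub⟩ := hμ.exists_add_sub_mem_relaxedMomentSet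
      (fun k => (hf k).integrable one_le_two) hg.1 hA
    exact hh0 (eq_zero_of_mem_extremePoints_of_add_mem_of_sub_mem hg hadd hsub)
  have hZ : MeasurableSet {x | g x = 1} :=
    (Lp.stronglyMeasurable g).measurable (measurableSet_singleton 1)
  have hg_ind : (g : X → ℝ) =ᵐ[μ] {x | g x = 1}.indicator 1 := by
    filter_upwards [hg.1.1, measure_eq_zero_iff_ae_notMem.1 hA] with x hx hxA
    rcases hx.2.eq_or_lt with h1 | h1
    · simp [h1]
    · have h0 : g x = 0 := le_antisymm (not_lt.1 fun h0 => hxA ⟨h0, h1⟩) hx.1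
      simp [h0]
  refine ⟨_, hZ, fun k => (Eq.trans ?_ (hg.1.2 k))⟩
  rw [← integral_indicator hZ]
  refine integral_congr_ae (hg_ind.mono fun x hx => ?_)
  simp only [hx, ← indicator_mul_left, Pi.one_apply, one_mul]

theorem MeasureAtomless.exists_measureReal_eq_mul [IsFiniteMeasure μ] (hμ : MeasureAtomless μ)
    [Fintype κ] (ν : κ → Measure X) [∀ k, IsFiniteMeasure (ν k)] (hν : ∀ k, ν k ≪ μ) {a : ℝ}
    (ha : a ∈ Icc 0 1) : ∃ Z, MeasurableSet Z ∧ ∀ k, (ν k).real Z = a * (ν k).real univ := by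
  -- adding the `ν k` to `μ` bounds their densities by `1`, so that they lie in `L²`
  set ρ := μ + ∑ k, ν k
  have hρ : MeasureAtomless ρ := hμ.of_le_of_absolutelyContinuous (Measure.le_add_right le_rfl)
    (Measure.AbsolutelyContinuous.rfl.add_left fun s hs => by
      simp [Measure.finsetSum_apply, fun k => hν k hs])
  have hνρ : ∀ k, ν k ≤ ρ := fun k =>
    (Finset.single_le_sum (fun j _ => Measure.zero_le (ν j)) (Finset.mem_univ k)).trans
      (Measure.le_add_left le_rfl)
  have hdens : ∀ k, MemLp (fun x => ((ν k).rnDeriv ρ x).toReal) 2 ρ := fun k =>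
    .of_bound (Measure.measurable_rnDeriv _ _).ennreal_toReal.aestronglyMeasurable 1 <|
      (Measure.rnDeriv_le_one_of_le (hνρ k)).mono fun x hx => by
        simpa using ENNReal.toReal_mono ENNReal.one_ne_top hx
  obtain ⟨Z, hZ, hZν⟩ := hρ.exists_setIntegral_eq_mul_integral hdens ha
  refine ⟨Z, hZ, fun k => ?_⟩
  have hac := Measure.absolutelyContinuous_of_le (hνρ k)
  rw [← Measure.setIntegral_toReal_rnDeriv' hac hZ, hZν, Measure.integral_toReal_rnDeriv hac]

end Lyapunov

theorem setIntegral_preimage_eq_measureReal_map_sub {α β : Type*} [MeasurableSpace α]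
    [MeasurableSpace β] {σ : Measure α} {F : α → ℝ} (hF : Integrable F σ) {π : α → β}
    (hπ : Measurable π) {S : Set β} (hS : MeasurableSet S) :
    ∫ z in π ⁻¹' S, F z ∂σ =
      ((σ.withDensity fun z => .ofReal (F z)).map π).real S -
        ((σ.withDensity fun z => .ofReal (-F z)).map π).real S := by
  rw [integral_eq_lintegral_pos_part_sub_lintegral_neg_part hF.restrict, measureReal_def,
    measureReal_def, Measure.map_apply hπ hS, Measure.map_apply hπ hS,
    withDensity_apply _ (hπ hS), withDensity_apply _ (hπ hS)]

theorem exists_setIntegral_preimage_fst_eq_mul {X Y ι : Type*} [MeasurableSpace X]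
    [MeasurableSpace Y] [Fintype ι] (σ : ι → Measure (X × Y)) [∀ i, IsFiniteMeasure (σ i)]
    (hσ : ∀ i, MeasureAtomless ((σ i).map Prod.fst)) {F : ι → X × Y → ℝ}
    (hF : ∀ i, Integrable (F i) (σ i)) {a : ℝ} (ha : a ∈ Icc 0 1) :
    ∃ Z, MeasurableSet Z ∧ ∀ i, ∫ z in Prod.fst ⁻¹' Z, F i z ∂σ i = a * ∫ z, F i z ∂σ i := by
  let ν : ι ⊕ ι → Measure X := Sum.elim
    (fun i => ((σ i).withDensity fun z => .ofReal (F i z)).map Prod.fst)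
    (fun i => ((σ i).withDensity fun z => .ofReal (-F i z)).map Prod.fst)
  have : ∀ k, IsFiniteMeasure (ν k) := by
    rintro (i | i)
    · have := isFiniteMeasure_withDensity_ofReal (hF i).2
      exact Measure.isFiniteMeasure_map _ _
    · have := isFiniteMeasure_withDensity_ofReal (hF i).neg.2
      exact Measure.isFiniteMeasure_map _ _
  have hac : ∀ k, ν k ≪ ∑ i, (σ i).map Prod.fst := by
    have hle : ∀ i, (σ i).map Prod.fst ≪ ∑ i, (σ i).map Prod.fst := fun i =>
      Measure.absolutelyContinuous_of_le
        (Finset.single_le_sum (fun j _ => Measure.zero_le _) (Finset.mem_univ i))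
    rintro (i | i) <;>
      exact ((withDensity_absolutelyContinuous _ _).map measurable_fst).trans (hle i)
  obtain ⟨Z, hZ, hZν⟩ :=
    (MeasureAtomless.finsetSum fun i _ => hσ i).exists_measureReal_eq_mul ν hac ha
  refine ⟨Z, hZ, fun i => ?_⟩
  have huniv := setIntegral_preimage_eq_measureReal_map_sub (hF i) measurable_fst .univ
  rw [preimage_univ, setIntegral_univ] at huniv
  rw [setIntegral_preimage_eq_measureReal_map_sub (hF i) measurable_fst hZ, huniv]
  have h₁ := hZν (.inl i)
  have h₂ := hZν (.inr i)
  simp only [ν, Sum.elim_inl, Sum.elim_inr] at h₁ h₂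
  rw [h₁, h₂, mul_sub]

theorem exists_mem_integral_eq_add_of_decomposable {X Y E ι : Type*} [MeasurableSpace X]
    [MeasurableSpace Y] [Fintype ι] (σ : ι → Measure (X × Y)) [∀ i, IsFiniteMeasure (σ i)]
    (hσ : ∀ i, MeasureAtomless ((σ i).map Prod.fst)) (L : ι → E → Y → ℝ) {Φ : Set (X → E)}
    (hdec : ∀ φ₁ ∈ Φ, ∀ φ₂ ∈ Φ, ∀ Z : Set X, MeasurableSet Z →
      ∃ φ₃ ∈ Φ, (∀ x ∈ Z, φ₃ x = φ₁ x) ∧ ∀ x ∉ Z, φ₃ x = φ₂ x)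
    (hint : ∀ φ ∈ Φ, ∀ i, Integrable (fun z : X × Y => L i (φ z.1) z.2) (σ i))
    {φ₁ φ₂ : X → E} (h₁ : φ₁ ∈ Φ) (h₂ : φ₂ ∈ Φ) {a b : ℝ} (ha : 0 ≤ a) (hb : 0 ≤ b)
    (hab : a + b = 1) :
    ∃ φ ∈ Φ, ∀ i, ∫ z, L i (φ z.1) z.2 ∂σ i =
      a * ∫ z, L i (φ₁ z.1) z.2 ∂σ i + b * ∫ z, L i (φ₂ z.1) z.2 ∂σ i := by
  obtain ⟨Z, hZ, hZL⟩ := exists_setIntegral_preimage_fst_eq_mul (fun κ : ι × Fin 2 => σ κ.1)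
    (fun κ => hσ κ.1) (F := fun κ z => L κ.1 (![φ₁, φ₂] κ.2 z.1) z.2)
    (Prod.forall.2 fun i => Fin.forall_fin_two.2 ⟨hint φ₁ h₁ i, hint φ₂ h₂ i⟩) ⟨ha, by linarith⟩
  obtain ⟨φ, hφ, hφZ, hφZc⟩ := hdec φ₁ h₁ φ₂ h₂ Z hZ
  refine ⟨φ, hφ, fun i => ?_⟩
  have hZ' : MeasurableSet (Prod.fst ⁻¹' Z : Set (X × Y)) := measurable_fst hZ
  rw [← integral_add_compl hZ' (hint φ hφ i),
    setIntegral_congr_fun hZ' fun z hz => by rw [hφZ z.1 hz],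
    setIntegral_congr_fun hZ'.compl fun z hz => by rw [hφZc z.1 hz],
    setIntegral_compl hZ' (hint φ₂ h₂ i)]
  have hZ₁ := hZL (i, 0)
  have hZ₂ := hZL (i, 1)
  simp only [Matrix.cons_val_zero, Matrix.cons_val_one] at hZ₁ hZ₂
  rw [hZ₁, hZ₂, show b = 1 - a by linarith]
  ring

theorem cost_constraint_epigraph_convex_general
    {X Y : Type*} [MeasurableSpace X] [MeasurableSpace Y]
    (K I J : ℕ)
    (D : Measure (X × Y)) [IsProbabilityMeasure D]
    (P : Fin I → Measure (X × Y)) [∀ i, IsProbabilityMeasure (P i)]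
    (Q : Fin J → Measure (X × Y)) [∀ j, IsProbabilityMeasure (Q j)]
    (l : EuclideanSpace ℝ (Fin K) → Y → ℝ)
    (g : Fin I → EuclideanSpace ℝ (Fin K) → Y → ℝ)
    (h : Fin J → EuclideanSpace ℝ (Fin K) → Y → ℝ)
    -- atomless X-marginals
    (hatomD : MeasureAtomless (D.map Prod.fst))
    (hatomP : ∀ i, MeasureAtomless ((P i).map Prod.fst))
    (hatomQ : ∀ j, MeasureAtomless ((Q j).map Prod.fst))
    (Φ : Set (X → EuclideanSpace ℝ (Fin K)))
    -- decomposability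
    (hdec : ∀ φ₁ ∈ Φ, ∀ φ₂ ∈ Φ, ∀ Z : Set X, MeasurableSet Z →
      ∃ φ₃ ∈ Φ, (∀ x ∈ Z, φ₃ x = φ₁ x) ∧ ∀ x ∉ Z, φ₃ x = φ₂ x)
    -- integrability of all the integrands
    (hintl : ∀ φ ∈ Φ, Integrable (fun z : X × Y => l (φ z.1) z.2) D)
    (hintg : ∀ φ ∈ Φ, ∀ i, Integrable (fun z : X × Y => g i (φ z.1) z.2) (P i))
    (hinth : ∀ φ ∈ Φ, ∀ j, Integrable (fun z : X × Y => h j (φ z.1) z.2) (Q j)) :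
    Convex ℝ {t : ℝ × (Fin I → ℝ) × (Fin J → ℝ) | ∃ φ ∈ Φ,
      (∫ z : X × Y, l (φ z.1) z.2 ∂D) = t.1 ∧
      (∀ i, (∫ z : X × Y, g i (φ z.1) z.2 ∂(P i)) ≤ t.2.1 i) ∧
      (∀ j, (∫ z : X × Y, h j (φ z.1) z.2 ∂(Q j)) = t.2.2 j)} := by
  rintro t₁ ⟨φ₁, h₁, hl₁, hg₁, hh₁⟩ t₂ ⟨φ₂, h₂, hl₂, hg₂, hh₂⟩ a b ha hb hab
  let σ : Unit ⊕ Fin I ⊕ Fin J → Measure (X × Y) := Sum.elim (fun _ => D) (Sum.elim P Q)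
  have : ∀ i, IsFiniteMeasure (σ i) := by rintro (_ | _ | _) <;> dsimp [σ] <;> infer_instance
  obtain ⟨φ, hφ, hφL⟩ := exists_mem_integral_eq_add_of_decomposable σ
    (by rintro (_ | i | j); exacts [hatomD, hatomP i, hatomQ j])
    (Sum.elim (fun _ => l) (Sum.elim g h)) hdec
    (by rintro φ hφ (_ | i | j); exacts [hintl φ hφ, hintg φ hφ i, hinth φ hφ j]) h₁ h₂ ha hb hab
  refine ⟨φ, hφ, ?_, fun i => ?_, fun j => ?_⟩
  · simpa [σ, ← hl₁, ← hl₂] using hφL (.inl ())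
  · have hφi := hφL (.inr (.inl i))
    simp only [σ, Sum.elim_inr, Sum.elim_inl] at hφi
    rw [hφi]
    exact add_le_add (mul_le_mul_of_nonneg_left (hg₁ i) ha) (mul_le_mul_of_nonneg_left (hg₂ i) hb)
  · simpa [σ, ← hh₁, ← hh₂] using hφL (.inr (.inr j))

/-- with atomless marginals and a decomposable class `Φ` of measurable functions
with integrable losses, the cost-constraint epigraph `M_φ` is a convex subset of
`ℝ^{1+I+J}`. -/
theorem cost_constraint_epigraph_convex
    {X Y : Type*} [MeasurableSpace X] [MeasurableSpace Y]
    (K I J : ℕ)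
    (D : Measure (X × Y)) [IsProbabilityMeasure D]
    (P : Fin I → Measure (X × Y)) [∀ i, IsProbabilityMeasure (P i)]
    (Q : Fin J → Measure (X × Y)) [∀ j, IsProbabilityMeasure (Q j)]
    (l : EuclideanSpace ℝ (Fin K) → Y → ℝ)
    (g : Fin I → EuclideanSpace ℝ (Fin K) → Y → ℝ)
    (h : Fin J → EuclideanSpace ℝ (Fin K) → Y → ℝ)
    (hl : Measurable (Function.uncurry l))
    (hg : ∀ i, Measurable (Function.uncurry (g i)))
    (hh : ∀ j, Measurable (Function.uncurry (h j)))
    -- atomless X-marginals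
    (hatomD : MeasureAtomless (D.map Prod.fst))
    (hatomP : ∀ i, MeasureAtomless ((P i).map Prod.fst))
    (hatomQ : ∀ j, MeasureAtomless ((Q j).map Prod.fst))
    (Φ : Set (X → EuclideanSpace ℝ (Fin K)))
    (hΦmeas : ∀ φ ∈ Φ, Measurable φ)
    -- decomposability
    (hdec : ∀ φ₁ ∈ Φ, ∀ φ₂ ∈ Φ, ∀ Z : Set X, MeasurableSet Z →
      ∃ φ₃ ∈ Φ, (∀ x ∈ Z, φ₃ x = φ₁ x) ∧ ∀ x ∉ Z, φ₃ x = φ₂ x)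
    -- integrability of all the integrands
    (hintl : ∀ φ ∈ Φ, Integrable (fun z : X × Y => l (φ z.1) z.2) D)
    (hintg : ∀ φ ∈ Φ, ∀ i, Integrable (fun z : X × Y => g i (φ z.1) z.2) (P i))
    (hinth : ∀ φ ∈ Φ, ∀ j, Integrable (fun z : X × Y => h j (φ z.1) z.2) (Q j)) :
    Convex ℝ {t : ℝ × (Fin I → ℝ) × (Fin J → ℝ) | ∃ φ ∈ Φ,
      (∫ z : X × Y, l (φ z.1) z.2 ∂D) = t.1 ∧
      (∀ i, (∫ z : X × Y, g i (φ z.1) z.2 ∂(P i)) ≤ t.2.1 i) ∧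
      (∀ j, (∫ z : X × Y, h j (φ z.1) z.2 ∂(Q j)) = t.2.2 j)} :=
  cost_constraint_epigraph_convex_general K I J D P Q l g h hatomD hatomP hatomQ Φ hdec hintl hintg
    hinth
end

section
/- For every t ≥ 1, the iterates of the dual-ascent algorithm satisfy U_t ≤ U_{t−1} + 2η·(q(γ_{t−1}) − D* + ρ) + η²·(I+J)·B². -/
/-- the basic recurrence for the dual mean-squared error of the
dual-ascent iterates. -/
theorem dual_ascent_recurrence
    (Θ : Type*) [Nonempty Θ] (I J : ℕ)
    (f : Θ → ℝ) (Cineq : Θ → Fin I → ℝ) (Ceq : Θ → Fin J → ℝ) (B : ℝ)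
    (hf : ∀ θ, |f θ| ≤ B) (hCi : ∀ θ i, |Cineq θ i| ≤ B) (hCe : ∀ θ j, |Ceq θ j| ≤ B)
    (Lag : Θ → (Fin I → ℝ) × (Fin J → ℝ) → ℝ)
    (hLag : ∀ θ γ, Lag θ γ = f θ + (∑ i, γ.1 i * Cineq θ i + ∑ j, γ.2 j * Ceq θ j))
    (q : (Fin I → ℝ) × (Fin J → ℝ) → ℝ)
    (hq : ∀ γ, IsGLB (Set.range fun θ => Lag θ γ) (q γ))
    (Γs : Set ((Fin I → ℝ) × (Fin J → ℝ)))
    (hΓs : Γs = {γ | (∀ i, 0 ≤ γ.1 i) ∧ ∀ γ', (∀ i, 0 ≤ γ'.1 i) → q γ' ≤ q γ})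
    (hΓne : Γs.Nonempty)
    (Dstar : ℝ) (hD : ∀ γs ∈ Γs, Dstar = q γs)
    (η ρ : ℝ) (hη : 0 < η) (hρ : 0 ≤ ρ)
    (γ : ℕ → (Fin I → ℝ) × (Fin J → ℝ)) (θ : ℕ → Θ)
    (hγ0 : ∀ i, 0 ≤ (γ 0).1 i)
    (horacle : ∀ t : ℕ, Lag (θ (t + 1)) (γ t) ≤ q (γ t) + ρ)
    (hupdlam : ∀ t : ℕ, ∀ i, (γ (t + 1)).1 i = max 0 ((γ t).1 i + η * Cineq (θ (t + 1)) i))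
    (hupdmu : ∀ t : ℕ, ∀ j, (γ (t + 1)).2 j = (γ t).2 j + η * Ceq (θ (t + 1)) j)
    (U : ℕ → ℝ)
    (hU : ∀ t, U t = sInf ((fun γs =>
      ∑ i, ((γ t).1 i - γs.1 i) ^ 2 + ∑ j, ((γ t).2 j - γs.2 j) ^ 2) '' Γs)) :
    ∀ t : ℕ, U (t + 1) ≤ U t + 2 * η * (q (γ t) - Dstar + ρ) + η ^ 2 * (I + J) * B ^ 2 := by
  intro t
  set θ' := θ (t + 1) with hθ'
  set c : ℝ := 2 * η * (q (γ t) - Dstar + ρ) + η ^ 2 * (I + J) * B ^ 2 with hc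
  have key : ∀ γs ∈ Γs,
      (∑ i, ((γ (t+1)).1 i - γs.1 i) ^ 2 + ∑ j, ((γ (t+1)).2 j - γs.2 j) ^ 2) ≤
      (∑ i, ((γ t).1 i - γs.1 i) ^ 2 + ∑ j, ((γ t).2 j - γs.2 j) ^ 2) + c := by
    intro γs hγs
    have hsnn : ∀ i, 0 ≤ γs.1 i := (hΓs ▸ hγs).1
    have hqγs : Dstar = q γs := hD γs hγs
    have hlb : q γs ≤ Lag θ' γs := (hq γs).1 ⟨θ', rfl⟩
    have hi : ∀ i, ((γ (t+1)).1 i - γs.1 i) ^ 2 ≤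
        ((γ t).1 i - γs.1 i) ^ 2 + 2 * η * (((γ t).1 i - γs.1 i) * Cineq θ' i)
          + η ^ 2 * B ^ 2 := by
      intro i
      rw [hupdlam t i]
      have habs := abs_le.1 (hCi θ' i)
      have hc2 : (Cineq θ' i) ^ 2 ≤ B ^ 2 := sq_le_sq' habs.1 habs.2
      have hη2 : η ^ 2 * (Cineq θ' i) ^ 2 ≤ η ^ 2 * B ^ 2 :=
        mul_le_mul_of_nonneg_left hc2 (sq_nonneg η)
      have hs := hsnn i
      rcases le_or_gt ((γ t).1 i + η * Cineq θ' i) 0 with h | h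
      · rw [max_eq_left h]
        nlinarith [mul_nonneg (neg_nonneg.2 h)
          (by linarith : (0:ℝ) ≤ 2 * γs.1 i - ((γ t).1 i + η * Cineq θ' i))]
      · rw [max_eq_right h.le]
        nlinarith
    have hj : ∀ j, ((γ (t+1)).2 j - γs.2 j) ^ 2 ≤
        ((γ t).2 j - γs.2 j) ^ 2 + 2 * η * (((γ t).2 j - γs.2 j) * Ceq θ' j)
          + η ^ 2 * B ^ 2 := by
      intro j
      rw [hupdmu t j]
      have habs := abs_le.1 (hCe θ' j)
      have hc2 : (Ceq θ' j) ^ 2 ≤ B ^ 2 := sq_le_sq' habs.1 habs.2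
      have hη2 : η ^ 2 * (Ceq θ' j) ^ 2 ≤ η ^ 2 * B ^ 2 :=
        mul_le_mul_of_nonneg_left hc2 (sq_nonneg η)
      nlinarith
    have hsum1 : ∑ i, ((γ (t+1)).1 i - γs.1 i) ^ 2 ≤
        ∑ i, (((γ t).1 i - γs.1 i) ^ 2 + 2 * η * (((γ t).1 i - γs.1 i) * Cineq θ' i)
          + η ^ 2 * B ^ 2) := Finset.sum_le_sum fun i _ => hi i
    have hsum2 : ∑ j, ((γ (t+1)).2 j - γs.2 j) ^ 2 ≤
        ∑ j, (((γ t).2 j - γs.2 j) ^ 2 + 2 * η * (((γ t).2 j - γs.2 j) * Ceq θ' j)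
          + η ^ 2 * B ^ 2) := Finset.sum_le_sum fun j _ => hj j
    have e1 : ∑ i, (((γ t).1 i - γs.1 i) ^ 2 + 2 * η * (((γ t).1 i - γs.1 i) * Cineq θ' i)
          + η ^ 2 * B ^ 2)
        = ∑ i, ((γ t).1 i - γs.1 i) ^ 2
          + 2 * η * (∑ i, ((γ t).1 i - γs.1 i) * Cineq θ' i) + I * (η ^ 2 * B ^ 2) := by
      simp [Finset.sum_add_distrib, Finset.mul_sum]
    have e2 : ∑ j, (((γ t).2 j - γs.2 j) ^ 2 + 2 * η * (((γ t).2 j - γs.2 j) * Ceq θ' j)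
          + η ^ 2 * B ^ 2)
        = ∑ j, ((γ t).2 j - γs.2 j) ^ 2
          + 2 * η * (∑ j, ((γ t).2 j - γs.2 j) * Ceq θ' j) + J * (η ^ 2 * B ^ 2) := by
      simp [Finset.sum_add_distrib, Finset.mul_sum]
    have hcrossEq : ∑ i, ((γ t).1 i - γs.1 i) * Cineq θ' i
        + ∑ j, ((γ t).2 j - γs.2 j) * Ceq θ' j = Lag θ' (γ t) - Lag θ' γs := by
      simp only [hLag, sub_mul, Finset.sum_sub_distrib]
      ring
    have hcb : Lag θ' (γ t) - Lag θ' γs ≤ q (γ t) - Dstar + ρ := by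
      have := horacle t
      rw [← hθ'] at this
      linarith [hqγs ▸ hlb]
    have hcross : 2 * η * (∑ i, ((γ t).1 i - γs.1 i) * Cineq θ' i
        + ∑ j, ((γ t).2 j - γs.2 j) * Ceq θ' j) ≤ 2 * η * (q (γ t) - Dstar + ρ) :=
      mul_le_mul_of_nonneg_left (hcrossEq ▸ hcb) (by linarith)
    have hIJ : η ^ 2 * ((I : ℝ) + J) * B ^ 2
        = I * (η ^ 2 * B ^ 2) + J * (η ^ 2 * B ^ 2) := by ring
    rw [e1] at hsum1
    rw [e2] at hsum2
    rw [hc]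
    linarith [hsum1, hsum2, hcross, hIJ]
  -- now pass to infima
  have hbddnew : BddBelow ((fun γs =>
      ∑ i, ((γ (t+1)).1 i - γs.1 i) ^ 2 + ∑ j, ((γ (t+1)).2 j - γs.2 j) ^ 2) '' Γs) := by
    refine ⟨0, ?_⟩
    rintro x ⟨γs, _, rfl⟩
    positivity
  have hneOld : ((fun γs =>
      ∑ i, ((γ t).1 i - γs.1 i) ^ 2 + ∑ j, ((γ t).2 j - γs.2 j) ^ 2) '' Γs).Nonempty :=
    hΓne.image _
  have hmain : U (t+1) ≤ U t + c := by
    rw [hU (t+1), hU t]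
    have hle : sInf ((fun γs =>
        ∑ i, ((γ (t+1)).1 i - γs.1 i) ^ 2 + ∑ j, ((γ (t+1)).2 j - γs.2 j) ^ 2) '' Γs) - c ≤
        sInf ((fun γs =>
        ∑ i, ((γ t).1 i - γs.1 i) ^ 2 + ∑ j, ((γ t).2 j - γs.2 j) ^ 2) '' Γs) := by
      apply le_csInf hneOld
      rintro x ⟨γs, hγs, rfl⟩
      dsimp only
      have h1 : sInf ((fun γs =>
          ∑ i, ((γ (t+1)).1 i - γs.1 i) ^ 2 + ∑ j, ((γ (t+1)).2 j - γs.2 j) ^ 2) '' Γs) ≤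
          ∑ i, ((γ (t+1)).1 i - γs.1 i) ^ 2 + ∑ j, ((γ (t+1)).2 j - γs.2 j) ^ 2 :=
        csInf_le hbddnew ⟨γs, hγs, rfl⟩
      linarith [key γs hγs]
    linarith
  rw [hc] at hmain
  linarith
end

section
/- For every T ∈ ℕ with T ≥ 1, the averaged Lagrangian iterates of the dual-ascent algorithm satisfy |D* − (1/T)·Σ_{t=0}^{T−1} L(θ_{t+1}, γ_t)| ≤ ρ + U₀/(2ηT) + ½·(I+J)·η·B². Moreover, if η ≤ ρ/((I+J)·B²) and T ≥ U₀/(ηρ), then the right-hand side is at most 2ρ. -/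
/-- Theorem 2 of the paper: guarantee for the averaged Lagrangian iterates
of the dual-ascent algorithm. -/
theorem dual_ascent_average_iterate_guarantee
    (Θ : Type*) [Nonempty Θ] (I J : ℕ)
    (f : Θ → ℝ) (Cineq : Θ → Fin I → ℝ) (Ceq : Θ → Fin J → ℝ) (B : ℝ)
    (hf : ∀ θ, |f θ| ≤ B) (hCi : ∀ θ i, |Cineq θ i| ≤ B) (hCe : ∀ θ j, |Ceq θ j| ≤ B)
    (Lag : Θ → (Fin I → ℝ) × (Fin J → ℝ) → ℝ)
    (hLag : ∀ θ γ, Lag θ γ = f θ + (∑ i, γ.1 i * Cineq θ i + ∑ j, γ.2 j * Ceq θ j))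
    (q : (Fin I → ℝ) × (Fin J → ℝ) → ℝ)
    (hq : ∀ γ, IsGLB (Set.range fun θ => Lag θ γ) (q γ))
    (Γs : Set ((Fin I → ℝ) × (Fin J → ℝ)))
    (hΓs : Γs = {γ | (∀ i, 0 ≤ γ.1 i) ∧ ∀ γ', (∀ i, 0 ≤ γ'.1 i) → q γ' ≤ q γ})
    (hΓne : Γs.Nonempty)
    (Dstar : ℝ) (hD : ∀ γs ∈ Γs, Dstar = q γs)
    (η ρ : ℝ) (hη : 0 < η) (hρ : 0 ≤ ρ)
    (γ : ℕ → (Fin I → ℝ) × (Fin J → ℝ)) (θ : ℕ → Θ)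
    (hγ0 : ∀ i, 0 ≤ (γ 0).1 i)
    (horacle : ∀ t : ℕ, q (γ t) ≤ Lag (θ (t + 1)) (γ t) ∧ Lag (θ (t + 1)) (γ t) ≤ q (γ t) + ρ)
    (hupdlam : ∀ t : ℕ, ∀ i, (γ (t + 1)).1 i = max 0 ((γ t).1 i + η * Cineq (θ (t + 1)) i))
    (hupdmu : ∀ t : ℕ, ∀ j, (γ (t + 1)).2 j = (γ t).2 j + η * Ceq (θ (t + 1)) j)
    (U₀ : ℝ)
    (hU₀ : U₀ = sInf ((fun γs =>
      ∑ i, ((γ 0).1 i - γs.1 i) ^ 2 + ∑ j, ((γ 0).2 j - γs.2 j) ^ 2) '' Γs)) :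
    ∀ T : ℕ, 1 ≤ T →
      |Dstar - (T : ℝ)⁻¹ * ∑ t ∈ Finset.range T, Lag (θ (t + 1)) (γ t)| ≤
        ρ + U₀ / (2 * η * T) + (1 / 2) * (I + J) * η * B ^ 2 ∧
      (η ≤ ρ / ((I + J) * B ^ 2) → U₀ / (η * ρ) ≤ (T : ℝ) →
        ρ + U₀ / (2 * η * T) + (1 / 2) * (I + J) * η * B ^ 2 ≤ 2 * ρ) := by
  classical
  -- feasibility of the iterates
  have hfeas : ∀ t, ∀ i, 0 ≤ (γ t).1 i := by
    intro t
    induction t with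
    | zero => exact hγ0
    | succ t ih => intro i; rw [hupdlam t i]; exact le_max_left _ _
  obtain ⟨γ₀s, hγ₀sΓ⟩ := hΓne
  have hγ₀s : (∀ i, 0 ≤ γ₀s.1 i) ∧ ∀ γ', (∀ i, 0 ≤ γ'.1 i) → q γ' ≤ q γ₀s := by
    have h := hγ₀sΓ; rw [hΓs] at h; exact h
  have hD0 : Dstar = q γ₀s := hD _ hγ₀sΓ
  have hqle : ∀ t, q (γ t) ≤ Dstar := fun t => hD0 ▸ hγ₀s.2 (γ t) (hfeas t)
  set L : ℕ → ℝ := fun t => Lag (θ (t + 1)) (γ t) with hLdef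
  have hLub : ∀ t, L t ≤ Dstar + ρ := fun t =>
    le_trans (horacle t).2 (by linarith [hqle t])
  have hLlb : ∀ t : ℕ, ∀ γs ∈ Γs, Dstar ≤ Lag (θ (t + 1)) γs := by
    intro t γs hγs
    rw [hD γs hγs]
    exact (hq γs).1 ⟨θ (t + 1), rfl⟩
  have hB0 : 0 ≤ B := le_trans (abs_nonneg _) (hf (Classical.arbitrary Θ))
  set K : ℝ := ((I : ℝ) + (J : ℝ)) * B ^ 2 with hKdef
  have hK0 : 0 ≤ K := by positivity
  set V : ((Fin I → ℝ) × (Fin J → ℝ)) → ℕ → ℝ := fun γs t =>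
    ∑ i, ((γ t).1 i - γs.1 i) ^ 2 + ∑ j, ((γ t).2 j - γs.2 j) ^ 2 with hV
  have hVnn : ∀ γs t, 0 ≤ V γs t := by
    intro γs t
    apply add_nonneg <;> exact Finset.sum_nonneg fun _ _ => sq_nonneg _
  -- one-step descent inequality
  have hstep : ∀ γs ∈ Γs, ∀ t : ℕ,
      V γs (t + 1) ≤ V γs t + 2 * η * (L t - Dstar) + η ^ 2 * K := by
    intro γs hγsΓ t
    have hγs : (∀ i, 0 ≤ γs.1 i) ∧ ∀ γ', (∀ i, 0 ≤ γ'.1 i) → q γ' ≤ q γs := by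
      have h := hγsΓ; rw [hΓs] at h; exact h
    have hIne : ∀ i, ((γ (t + 1)).1 i - γs.1 i) ^ 2 ≤
        ((γ t).1 i - γs.1 i) ^ 2
          + 2 * η * (((γ t).1 i - γs.1 i) * Cineq (θ (t + 1)) i) + η ^ 2 * B ^ 2 := by
      intro i
      rw [hupdlam t i]
      set a := (γ t).1 i
      set c := Cineq (θ (t + 1)) i
      set l := γs.1 i
      have hl : 0 ≤ l := hγs.1 i
      obtain ⟨hc1, hc2⟩ := abs_le.mp (hCi (θ (t + 1)) i)
      have hc : c ^ 2 ≤ B ^ 2 := by nlinarith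
      rcases le_total 0 (a + η * c) with h | h
      · rw [max_eq_right h]
        nlinarith [sq_nonneg η]
      · rw [max_eq_left h]
        nlinarith [sq_nonneg η, mul_nonneg hl (neg_nonneg.mpr h)]
    have hJne : ∀ j, ((γ (t + 1)).2 j - γs.2 j) ^ 2 ≤
        ((γ t).2 j - γs.2 j) ^ 2
          + 2 * η * (((γ t).2 j - γs.2 j) * Ceq (θ (t + 1)) j) + η ^ 2 * B ^ 2 := by
      intro j
      rw [hupdmu t j]
      set a := (γ t).2 j
      set c := Ceq (θ (t + 1)) j
      set l := γs.2 j
      obtain ⟨hc1, hc2⟩ := abs_le.mp (hCe (θ (t + 1)) j)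
      have hc : c ^ 2 ≤ B ^ 2 := by nlinarith
      nlinarith [sq_nonneg η]
    set S : ℝ := ∑ i, ((γ t).1 i - γs.1 i) * Cineq (θ (t + 1)) i
      + ∑ j, ((γ t).2 j - γs.2 j) * Ceq (θ (t + 1)) j with hSdef
    have hS : S = Lag (θ (t + 1)) (γ t) - Lag (θ (t + 1)) γs := by
      rw [hSdef, hLag, hLag]
      simp only [sub_mul, Finset.sum_sub_distrib]
      ring
    have hSle : S ≤ L t - Dstar := by
      rw [hS]
      have h := hLlb t γs hγsΓ
      simp only [hLdef]
      linarith
    have hsum1 : V γs (t + 1) ≤ V γs t + 2 * η * S + η ^ 2 * K := by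
      have h1 : ∑ i, ((γ (t + 1)).1 i - γs.1 i) ^ 2 ≤
          ∑ i, (((γ t).1 i - γs.1 i) ^ 2
            + 2 * η * (((γ t).1 i - γs.1 i) * Cineq (θ (t + 1)) i) + η ^ 2 * B ^ 2) :=
        Finset.sum_le_sum fun i _ => hIne i
      have h2 : ∑ j, ((γ (t + 1)).2 j - γs.2 j) ^ 2 ≤
          ∑ j, (((γ t).2 j - γs.2 j) ^ 2
            + 2 * η * (((γ t).2 j - γs.2 j) * Ceq (θ (t + 1)) j) + η ^ 2 * B ^ 2) :=
        Finset.sum_le_sum fun j _ => hJne j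
      have e1 : ∑ i, (((γ t).1 i - γs.1 i) ^ 2
            + 2 * η * (((γ t).1 i - γs.1 i) * Cineq (θ (t + 1)) i) + η ^ 2 * B ^ 2)
          = (∑ i, ((γ t).1 i - γs.1 i) ^ 2)
            + 2 * η * (∑ i, ((γ t).1 i - γs.1 i) * Cineq (θ (t + 1)) i)
            + (I : ℝ) * (η ^ 2 * B ^ 2) := by
        simp [Finset.sum_add_distrib, ← Finset.mul_sum, Finset.card_univ, mul_comm]
      have e2 : ∑ j, (((γ t).2 j - γs.2 j) ^ 2
            + 2 * η * (((γ t).2 j - γs.2 j) * Ceq (θ (t + 1)) j) + η ^ 2 * B ^ 2)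
          = (∑ j, ((γ t).2 j - γs.2 j) ^ 2)
            + 2 * η * (∑ j, ((γ t).2 j - γs.2 j) * Ceq (θ (t + 1)) j)
            + (J : ℝ) * (η ^ 2 * B ^ 2) := by
        simp [Finset.sum_add_distrib, ← Finset.mul_sum, Finset.card_univ, mul_comm]
      have h3 := add_le_add h1 h2
      rw [e1, e2] at h3
      refine le_trans (le_of_eq ?_) (le_trans h3 (le_of_eq ?_))
      · simp only [hV]
      · simp only [hV, hSdef, hKdef]
        push_cast
        ring
    have h4 : 2 * η * S ≤ 2 * η * (L t - Dstar) :=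
      mul_le_mul_of_nonneg_left hSle (by linarith)
    linarith
  -- telescoped inequality
  have hsum : ∀ γs ∈ Γs, ∀ T : ℕ,
      V γs T ≤ V γs 0 + 2 * η * (∑ t ∈ Finset.range T, (L t - Dstar))
        + (T : ℝ) * (η ^ 2 * K) := by
    intro γs hγs T
    induction T with
    | zero => simp
    | succ T ih =>
      rw [Finset.sum_range_succ]
      have h1 := hstep γs hγs T
      push_cast
      have e : 2 * η * ((∑ t ∈ Finset.range T, (L t - Dstar)) + (L T - Dstar))
          = 2 * η * (∑ t ∈ Finset.range T, (L t - Dstar)) + 2 * η * (L T - Dstar) := by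
        ring
      rw [e]
      linarith
  have hkey : ∀ γs ∈ Γs, ∀ T : ℕ,
      2 * η * ((T : ℝ) * Dstar - (∑ t ∈ Finset.range T, L t) - (T : ℝ) * (η * K) / 2)
        ≤ V γs 0 := by
    intro γs hγs T
    have h1 := hsum γs hγs T
    have h2 := hVnn γs T
    have e : ∑ t ∈ Finset.range T, (L t - Dstar)
        = (∑ t ∈ Finset.range T, L t) - (T : ℝ) * Dstar := by
      rw [Finset.sum_sub_distrib]
      simp [mul_comm]
    rw [e] at h1
    have e2 : 2 * η * ((T : ℝ) * Dstar - (∑ t ∈ Finset.range T, L t)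
          - (T : ℝ) * (η * K) / 2)
        = -(2 * η * ((∑ t ∈ Finset.range T, L t) - (T : ℝ) * Dstar)
            + (T : ℝ) * (η ^ 2 * K)) := by
      ring
    rw [e2]
    linarith
  have hUb : ∀ T : ℕ,
      2 * η * ((T : ℝ) * Dstar - (∑ t ∈ Finset.range T, L t) - (T : ℝ) * (η * K) / 2)
        ≤ U₀ := by
    intro T
    rw [hU₀]
    apply le_csInf (Set.Nonempty.image _ ⟨γ₀s, hγ₀sΓ⟩)
    rintro b ⟨γs, hγs, rfl⟩
    simpa using hkey γs hγs T
  have hU0nn : 0 ≤ U₀ := by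
    rw [hU₀]
    apply le_csInf (Set.Nonempty.image _ ⟨γ₀s, hγ₀sΓ⟩)
    rintro b ⟨γs, hγs, rfl⟩
    positivity
  intro T hT
  have hTpos : (0 : ℝ) < T := by exact_mod_cast hT
  have hTne : (T : ℝ) ≠ 0 := hTpos.ne'
  have hKgoal : (1 / 2 : ℝ) * ((I : ℝ) + (J : ℝ)) * η * B ^ 2 = η * K / 2 := by
    rw [hKdef]; ring
  constructor
  · rw [abs_le]
    constructor
    · -- lower bound
      have hsub : (∑ t ∈ Finset.range T, L t) ≤ (T : ℝ) * (Dstar + ρ) := by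
        calc (∑ t ∈ Finset.range T, L t)
            ≤ ∑ _t ∈ Finset.range T, (Dstar + ρ) := Finset.sum_le_sum fun t _ => hLub t
          _ = (T : ℝ) * (Dstar + ρ) := by
              rw [Finset.sum_const, Finset.card_range, nsmul_eq_mul]
      have h1 : (T : ℝ)⁻¹ * (∑ t ∈ Finset.range T, L t) ≤ Dstar + ρ := by
        rw [inv_mul_le_iff₀ hTpos]
        exact hsub
      have h2 : 0 ≤ U₀ / (2 * η * (T : ℝ)) := by positivity
      have h3 : 0 ≤ (1 / 2 : ℝ) * ((I : ℝ) + (J : ℝ)) * η * B ^ 2 := by positivity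
      linarith
    · have h := hUb T
      have h2 : Dstar - (T : ℝ)⁻¹ * (∑ t ∈ Finset.range T, L t) - η * K / 2
          ≤ U₀ / (2 * η * (T : ℝ)) := by
        rw [le_div_iff₀ (by positivity : (0 : ℝ) < 2 * η * (T : ℝ))]
        calc (Dstar - (T : ℝ)⁻¹ * (∑ t ∈ Finset.range T, L t) - η * K / 2)
              * (2 * η * (T : ℝ))
            = 2 * η * ((T : ℝ) * Dstar - (∑ t ∈ Finset.range T, L t)
                - (T : ℝ) * (η * K) / 2) := by
              field_simp
          _ ≤ U₀ := h
      rw [hKgoal]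
      linarith
  · intro hη' hT'
    rw [hKgoal]
    rcases eq_or_lt_of_le hK0 with hKz | hKpos
    · exfalso
      rw [← hKz, div_zero] at hη'
      linarith
    · have hηK : η * K ≤ ρ := by
        rw [le_div_iff₀ hKpos] at hη'
        exact hη'
      have hρpos : 0 < ρ := lt_of_lt_of_le (by positivity) hηK
      have hU₀le : U₀ ≤ (T : ℝ) * (η * ρ) := by
        rw [div_le_iff₀ (by positivity)] at hT'
        linarith
      have h3 : U₀ / (2 * η * (T : ℝ)) ≤ ρ / 2 := by
        rw [div_le_iff₀ (by positivity : (0 : ℝ) < 2 * η * (T : ℝ))]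
        nlinarith
      linarith
end

section
/- Let X ∈ ℝ^{n×n} with XXᵀ invertible and suppose y = Xw₀ for some w₀ ≠ 0. For ε > 0, consider the problem (P_ε): minimize ½‖w‖₂² over w ∈ ℝⁿ subject to ½‖Xw − y‖₂² ≤ ε, with dual function q_ε(λ) = inf_{w∈ℝⁿ} [½‖w‖₂² + λ·(½‖Xw − y‖₂² − ε)] for λ ≥ 0. Then for every ε > 0: (P_ε) attains its minimum, strong duality holds (the optimal value of (P_ε) equals sup_{λ≥0} q_ε(λ)), and the dual supremum is attained. Moreover, any selection of dual maximizers diverges as ε → 0⁺: for every M > 0 there exists ε₀ > 0 such that for all 0 < ε ≤ ε₀, every maximizer λ* of q_ε satisfies λ* ≥ M. -/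
/-!
The feasible set is the preimage of a ball under the invertible map `X`, hence closed, convex and
nonempty, so it has a point `w` of minimal norm, characterized by `⟪w, v - w⟫ ≥ 0` on the feasible
set. Read through `X`, this says that `X w` minimizes a linear functional over the ball, so the
functional is a nonnegative multiple of the inward normal at `X w`; that multiple is a Lagrange
multiplier making `w` a saddle point of the Lagrangian, which gives strong duality and dual
attainment.

For the divergence, testing the Lagrangian at `(1 - δ) • w₀` bounds the dual function on `[0, M]`
by a constant strictly below `‖w₀‖² / 2`, while the primal value tends to `‖w₀‖² / 2` because the
feasible sets shrink to `{w₀}` as `ε → 0`.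
-/

open Matrix Filter Topology Set Metric
open scoped RealInnerProductSpace

section LagrangianDuality

variable {α β : Type*} (f g : α → ℝ) (ε : ℝ)

def lagrangian (lam : ℝ) (w : α) : ℝ := f w + lam * (g w - ε)

noncomputable def dualFunction (lam : ℝ) : ℝ := sInf (range (lagrangian f g ε lam))

structure IsLagrangianSaddle (w : α) (lam : ℝ) : Prop where
  feasible : g w ≤ ε
  nonneg : 0 ≤ lam
  complementary : lam * (g w - ε) = 0
  isMin : ∀ v, lagrangian f g ε lam w ≤ lagrangian f g ε lam v

variable {f g ε}

lemma dualFunction_comp_equiv (e : β ≃ α) (lam : ℝ) :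
    dualFunction (f ∘ e) (g ∘ e) ε lam = dualFunction f g ε lam :=
  congrArg sInf (e.surjective.range_comp (lagrangian f g ε lam))

lemma bddBelow_range_lagrangian (hf : ∀ w, 0 ≤ f w) (hg : ∀ w, 0 ≤ g w) {lam : ℝ}
    (hlam : 0 ≤ lam) : BddBelow (range (lagrangian f g ε lam)) := by
  refine ⟨-(lam * ε), ?_⟩
  rintro _ ⟨w, rfl⟩
  show -(lam * ε) ≤ f w + lam * (g w - ε)
  nlinarith [hf w, mul_nonneg hlam (hg w)]

lemma dualFunction_le_of_feasible {lam : ℝ} (hbdd : BddBelow (range (lagrangian f g ε lam)))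
    (hlam : 0 ≤ lam) {w : α} (hw : g w ≤ ε) : dualFunction f g ε lam ≤ f w :=
  (csInf_le hbdd ⟨w, rfl⟩).trans <| by
    simpa [lagrangian] using mul_nonpos_of_nonneg_of_nonpos hlam (sub_nonpos.2 hw)

namespace IsLagrangianSaddle

variable {w : α} {lam : ℝ}

lemma comp_equiv (h : IsLagrangianSaddle f g ε w lam) (e : β ≃ α) :
    IsLagrangianSaddle (f ∘ e) (g ∘ e) ε (e.symm w) lam where
  feasible := by simpa using h.feasible
  nonneg := h.nonneg
  complementary := by simpa using h.complementary
  isMin v := by simpa [lagrangian] using h.isMin (e v)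

lemma lagrangian_eq (h : IsLagrangianSaddle f g ε w lam) : lagrangian f g ε lam w = f w := by
  simp [lagrangian, h.complementary]

lemma dualFunction_eq (h : IsLagrangianSaddle f g ε w lam) : dualFunction f g ε lam = f w := by
  rw [dualFunction, ← h.lagrangian_eq]
  exact IsLeast.csInf_eq ⟨⟨w, rfl⟩, by rintro _ ⟨v, rfl⟩; exact h.isMin v⟩

lemma isLeast_image (h : IsLagrangianSaddle f g ε w lam) :
    IsLeast (f '' {v | g v ≤ ε}) (f w) := by
  refine ⟨⟨w, h.feasible, rfl⟩, ?_⟩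
  rintro _ ⟨v, hv, rfl⟩
  have hL := h.isMin v
  rw [h.lagrangian_eq, lagrangian] at hL
  nlinarith [mul_nonpos_of_nonneg_of_nonpos h.nonneg (sub_nonpos.2 hv)]

lemma dualFunction_le (h : IsLagrangianSaddle f g ε w lam)
    (hbdd : ∀ lam' ≥ 0, BddBelow (range (lagrangian f g ε lam'))) {lam' : ℝ}
    (hlam' : 0 ≤ lam') : dualFunction f g ε lam' ≤ dualFunction f g ε lam :=
  h.dualFunction_eq ▸ dualFunction_le_of_feasible (hbdd lam' hlam') hlam' h.feasible

lemma isLUB_dualFunction (h : IsLagrangianSaddle f g ε w lam)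
    (hbdd : ∀ lam' ≥ 0, BddBelow (range (lagrangian f g ε lam'))) :
    IsLUB {d | ∃ lam' ≥ 0, d = dualFunction f g ε lam'} (f w) :=
  ⟨by rintro _ ⟨lam', hlam', rfl⟩; exact h.dualFunction_eq ▸ h.dualFunction_le hbdd hlam',
    fun _ hb => hb ⟨lam, h.nonneg, h.dualFunction_eq.symm⟩⟩

end IsLagrangianSaddle

end LagrangianDuality

section MinNormInterpolation

variable {E F : Type*} [NormedAddCommGroup E] [InnerProductSpace ℝ E]
  [NormedAddCommGroup F] [InnerProductSpace ℝ F]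

lemma exists_mem_forall_inner_sub_nonneg {K : Set E} (hne : K.Nonempty) (hc : IsComplete K)
    (hK : Convex ℝ K) : ∃ w ∈ K, ∀ v ∈ K, 0 ≤ ⟪w, v - w⟫ := by
  obtain ⟨w, hw, hmin⟩ := exists_norm_eq_iInf_of_complete_convex hne hc hK 0
  refine ⟨w, hw, fun v hv => ?_⟩
  simpa [inner_neg_left] using (norm_eq_iInf_iff_real_inner_le_zero hK hw).1 hmin v hv

lemma exists_nonneg_smul_of_isMinOn_inner_closedBall {h c p : F} {r : ℝ} (hr : 0 < r)
    (hp : p ∈ closedBall c r) (hmin : IsMinOn (fun v => ⟪h, v⟫) (closedBall c r) p) :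
    ∃ μ ≥ (0 : ℝ), h = μ • (c - p) ∧ (μ = 0 ∨ ‖p - c‖ = r) := by
  rcases eq_or_ne h 0 with rfl | hh
  · exact ⟨0, le_rfl, by simp, Or.inl rfl⟩
  have hhpos : 0 < ‖h‖ := norm_pos_iff.2 hh
  have hpc : ‖c - p‖ ≤ r := by rwa [norm_sub_rev, ← dist_eq_norm]
  -- compare with the minimizer `c - (r / ‖h‖) • h` of the functional over the ball
  have hfar : r * ‖h‖ ≤ ⟪h, c - p⟫ := by
    have hv : c - (r / ‖h‖) • h ∈ closedBall c r := by
      rw [mem_closedBall, dist_eq_norm, sub_sub_cancel_left, norm_neg, norm_smul,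
        Real.norm_of_nonneg (by positivity), div_mul_cancel₀ _ hhpos.ne']
    have hle : ⟪h, p⟫ ≤ ⟪h, c - (r / ‖h‖) • h⟫ := hmin hv
    rw [inner_sub_right, inner_smul_right, real_inner_self_eq_norm_sq] at hle
    rw [inner_sub_right]
    field_simp at hle
    nlinarith
  have hcs := real_inner_le_norm h (c - p)
  have hnorm : ‖c - p‖ = r := le_antisymm hpc (le_of_mul_le_mul_right (by linarith) hhpos)
  have hcol : ‖c - p‖ • h = ‖h‖ • (c - p) :=
    inner_eq_norm_mul_iff_real.1 (le_antisymm hcs (by nlinarith))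
  refine ⟨‖h‖ / r, by positivity, ?_, Or.inr (by rwa [norm_sub_rev])⟩
  rw [hnorm] at hcol
  rw [div_eq_inv_mul, mul_smul, ← hcol, smul_smul, inv_mul_cancel₀ hr.ne', one_smul]

lemma lagrangian_half_sq_norm_le_of_stationary (T : E →L[ℝ] F) (y : F) (ε : ℝ) {w : E}
    {lam : ℝ} (hlam : 0 ≤ lam) (hstat : ∀ d, ⟪w, d⟫ + lam * ⟪T w - y, T d⟫ = 0) (v : E) :
    lagrangian (fun w => ‖w‖ ^ 2 / 2) (fun w => ‖T w - y‖ ^ 2 / 2) ε lam w ≤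
      lagrangian (fun w => ‖w‖ ^ 2 / 2) (fun w => ‖T w - y‖ ^ 2 / 2) ε lam v := by
  obtain ⟨d, rfl⟩ : ∃ d, v = w + d := ⟨v - w, by abel⟩
  have hres : T (w + d) - y = (T w - y) + T d := by rw [map_add]; abel
  simp only [lagrangian, hres, norm_add_sq_real]
  nlinarith [hstat d, sq_nonneg ‖d‖, mul_nonneg hlam (sq_nonneg ‖T d‖)]

theorem exists_isLagrangianSaddle_half_sq_norm [CompleteSpace E] [CompleteSpace F]
    (T : E ≃L[ℝ] F) (y : F) {ε : ℝ} (hε : 0 < ε) :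
    ∃ w lam, IsLagrangianSaddle (fun w => ‖w‖ ^ 2 / 2) (fun w => ‖T w - y‖ ^ 2 / 2) ε w lam := by
  set r := √(2 * ε)
  have hr : 0 < r := Real.sqrt_pos.2 (by linarith)
  have hfeas : ∀ w, ‖T w - y‖ ^ 2 / 2 ≤ ε ↔ T w ∈ closedBall y r := fun w => by
    rw [mem_closedBall, dist_eq_norm, Real.le_sqrt (norm_nonneg _) (by linarith)]
    constructor <;> intro <;> linarith
  obtain ⟨w, hwK, hvi⟩ := exists_mem_forall_inner_sub_nonneg (K := T ⁻¹' closedBall y r)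
    ⟨T.symm y, by simp [hr.le]⟩ (isClosed_closedBall.preimage T.continuous).isComplete
    ((convex_closedBall y r).linear_preimage (T : E →ₗ[ℝ] F))
  set h := ContinuousLinearMap.adjoint (T.symm : F →L[ℝ] E) w
  have hh : ∀ d, ⟪h, T d⟫ = ⟪w, d⟫ := fun d => by
    simp [h, ContinuousLinearMap.adjoint_inner_left]
  obtain ⟨μ, hμ, hhμ, hslack⟩ := exists_nonneg_smul_of_isMinOn_inner_closedBall hr hwK
    fun v hv => by
      have := hvi (T.symm v) (by simpa using hv)
      rw [← hh, map_sub, T.apply_symm_apply, inner_sub_right] at this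
      show ⟪h, T w⟫ ≤ ⟪h, v⟫
      linarith
  have hstat : ∀ d, ⟪w, d⟫ + μ * ⟪T w - y, T d⟫ = 0 := fun d => by
    rw [← hh, hhμ, inner_smul_left, ← neg_sub (T w) y, inner_neg_left]
    simp
  refine ⟨w, μ, (hfeas w).2 hwK, hμ, ?_,
    lagrangian_half_sq_norm_le_of_stationary (T : E →L[ℝ] F) y ε hμ hstat⟩
  rcases hslack with rfl | hnorm
  · simp
  · rw [hnorm, Real.sq_sqrt (by linarith)]
    ring

lemma dualFunction_half_sq_norm_le (T : E →L[ℝ] F) {w₀ : E} (hw₀ : w₀ ≠ 0) {ε lam M : ℝ}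
    (hε : 0 ≤ ε) (hlam : 0 ≤ lam) (hM : lam ≤ M) :
    dualFunction (fun w => ‖w‖ ^ 2 / 2) (fun w => ‖T w - T w₀‖ ^ 2 / 2) ε lam ≤
      ‖w₀‖ ^ 2 * (M * ‖T w₀‖ ^ 2) / (2 * (‖w₀‖ ^ 2 + M * ‖T w₀‖ ^ 2)) := by
  set a := ‖w₀‖ ^ 2
  set b := ‖T w₀‖ ^ 2
  have ha : 0 < a := by positivity
  have hMb : 0 ≤ M * b := mul_nonneg (hlam.trans hM) (sq_nonneg _)
  have hbdd := bddBelow_range_lagrangian (f := fun w : E => ‖w‖ ^ 2 / 2)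
    (g := fun w => ‖T w - T w₀‖ ^ 2 / 2) (ε := ε) (fun _ => by positivity)
    (fun _ => by positivity) hlam
  -- `δ` minimizes the bound `(1 - δ) ^ 2 * a / 2 + M * (δ ^ 2 * b / 2)` obtained below
  set δ := a / (a + M * b)
  have htest := csInf_le hbdd ⟨(1 - δ) • w₀, rfl⟩
  have hres : T ((1 - δ) • w₀) - T w₀ = (-δ) • T w₀ := by
    rw [map_smul, sub_smul, one_smul, neg_smul]; abel
  simp only [lagrangian, hres, norm_smul, mul_pow, Real.norm_eq_abs, sq_abs] at htest
  rw [dualFunction]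
  refine htest.trans ?_
  have hδ : (1 - δ) ^ 2 * a / 2 + M * (δ ^ 2 * b / 2) =
      a * (M * b) / (2 * (a + M * b)) := by
    simp only [δ]; field_simp; ring
  nlinarith [mul_le_mul_of_nonneg_right hM (by positivity : 0 ≤ δ ^ 2 * b / 2),
    mul_nonneg hlam hε]

lemma eventually_forall_half_sq_norm_sub_le_imp_mem (T : E ≃L[ℝ] F) (w₀ : E) {U : Set E}
    (hU : U ∈ 𝓝 w₀) : ∀ᶠ ε in 𝓝 (0 : ℝ), ∀ w, ‖T w - T w₀‖ ^ 2 / 2 ≤ ε → w ∈ U := by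
  obtain ⟨η, hη, hball⟩ := Metric.mem_nhds_iff.1 hU
  set K := ‖(T.symm : F →L[ℝ] E)‖
  have hlim : Tendsto (fun ε : ℝ => 2 * K ^ 2 * ε) (𝓝 0) (𝓝 0) :=
    (continuous_const_mul _).tendsto' 0 0 (mul_zero _)
  filter_upwards [hlim.eventually (gt_mem_nhds (by positivity : (0 : ℝ) < η ^ 2))]
    with ε hε w hw
  apply hball
  rw [mem_ball, dist_eq_norm]
  have hw' : w - w₀ = T.symm (T w - T w₀) := by simp
  have hle : ‖w - w₀‖ ≤ K * ‖T w - T w₀‖ := hw' ▸ (T.symm : F →L[ℝ] E).le_opNorm _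
  refine lt_of_pow_lt_pow_left₀ 2 hη.le ?_
  calc ‖w - w₀‖ ^ 2 ≤ (K * ‖T w - T w₀‖) ^ 2 := by gcongr
    _ = K ^ 2 * ‖T w - T w₀‖ ^ 2 := by ring
    _ ≤ K ^ 2 * (2 * ε) := by gcongr; linarith
    _ < η ^ 2 := by linarith

theorem exists_pos_forall_le_dual_maximizer [CompleteSpace E] [CompleteSpace F]
    (T : E ≃L[ℝ] F) {w₀ : E} (hw₀ : w₀ ≠ 0) {M : ℝ} (hM : 0 ≤ M) :
    ∃ ε₀ > 0, ∀ ε : ℝ, 0 < ε → ε ≤ ε₀ → ∀ lam ≥ 0,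
      (∀ lam' ≥ 0, dualFunction (fun w => ‖w‖ ^ 2 / 2) (fun w => ‖T w - T w₀‖ ^ 2 / 2) ε lam' ≤
        dualFunction (fun w => ‖w‖ ^ 2 / 2) (fun w => ‖T w - T w₀‖ ^ 2 / 2) ε lam) →
      M ≤ lam := by
  set c := ‖w₀‖ ^ 2 * (M * ‖T w₀‖ ^ 2) / (2 * (‖w₀‖ ^ 2 + M * ‖T w₀‖ ^ 2))
  have hc : c < ‖w₀‖ ^ 2 / 2 := by
    have ha : 0 < ‖w₀‖ ^ 2 := by positivity
    have hMb : 0 ≤ M * ‖T w₀‖ ^ 2 := by positivity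
    rw [div_lt_div_iff₀ (by positivity) two_pos]
    nlinarith
  have hU : {w : E | c < ‖w‖ ^ 2 / 2} ∈ 𝓝 w₀ :=
    (isOpen_lt continuous_const (by fun_prop)).mem_nhds hc
  obtain ⟨ε₀, hε₀, hsub⟩ := mem_nhdsGT_iff_exists_Ioc_subset.1
    (nhdsWithin_le_nhds (eventually_forall_half_sq_norm_sub_le_imp_mem T w₀ hU))
  refine ⟨ε₀, hε₀, fun ε hε hεle lam hlam hmax => ?_⟩
  by_contra! hlt
  obtain ⟨w, lam₀, hsad⟩ := exists_isLagrangianSaddle_half_sq_norm T (T w₀) hε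
  have hprimal : c < ‖w‖ ^ 2 / 2 := hsub ⟨hε, hεle⟩ w hsad.feasible
  have hdual := hsad.dualFunction_eq ▸ hmax lam₀ hsad.nonneg
  have hbound := dualFunction_half_sq_norm_le (T : E →L[ℝ] F) hw₀ hε.le hlam hlt.le
  exact lt_irrefl c (hprimal.trans_le (hdual.trans hbound))

end MinNormInterpolation

/-- for the inequality relaxation of the minimum-norm interpolation problem,
the primal is attained, strong duality holds with dual attainment for every `ε > 0`, and
every dual maximizer diverges as `ε → 0⁺`. -/
theorem relaxed_min_norm_dual_divergence
    (n : ℕ) (X : Matrix (Fin n) (Fin n) ℝ) (w₀ : Fin n → ℝ)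
    (hX : IsUnit (X * Xᵀ)) (hw₀ : w₀ ≠ 0)
    (y : Fin n → ℝ) (hy : y = X.mulVec w₀)
    (obj : (Fin n → ℝ) → ℝ) (hobj : ∀ w, obj w = (1 / 2) * ∑ i, w i ^ 2)
    (con : (Fin n → ℝ) → ℝ) (hcon : ∀ w, con w = (1 / 2) * ∑ i, (X.mulVec w i - y i) ^ 2)
    (q : ℝ → ℝ → ℝ)
    (hq : ∀ ε lam, q ε lam = sInf (Set.range fun w => obj w + lam * (con w - ε)))
    (pval : ℝ → ℝ)
    (hp : ∀ ε, pval ε = sInf (obj '' {w | con w ≤ ε})) :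
    (∀ ε > (0 : ℝ),
      -- the primal minimum is attained
      (∃ w, con w ≤ ε ∧ ∀ w', con w' ≤ ε → obj w ≤ obj w') ∧
      -- strong duality: the primal value is the supremum of the dual function over λ ≥ 0
      IsLUB {d : ℝ | ∃ lam ≥ (0 : ℝ), d = q ε lam} (pval ε) ∧
      -- the dual supremum is attained
      (∃ lam ≥ (0 : ℝ), (∀ lam' ≥ (0 : ℝ), q ε lam' ≤ q ε lam) ∧ q ε lam = pval ε)) ∧
    -- every selection of dual maximizers diverges as ε → 0⁺
    (∀ M > (0 : ℝ), ∃ ε₀ > (0 : ℝ), ∀ ε : ℝ, 0 < ε → ε ≤ ε₀ →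
      ∀ lam ≥ (0 : ℝ), (∀ lam' ≥ (0 : ℝ), q ε lam' ≤ q ε lam) → M ≤ lam) := by
  let T : EuclideanSpace ℝ (Fin n) ≃L[ℝ] EuclideanSpace ℝ (Fin n) :=
    .ofUnit ((isUnit_of_mul_isUnit_left hX).map (toEuclideanCLM (𝕜 := ℝ) (n := Fin n))).unit
  have hT : ∀ v, T (WithLp.toLp 2 v) = WithLp.toLp 2 (X *ᵥ v) := fun _ => rfl
  let e : (Fin n → ℝ) ≃ EuclideanSpace ℝ (Fin n) := (WithLp.equiv 2 _).symm
  have hobj' : obj = (fun v => ‖v‖ ^ 2 / 2) ∘ e := funext fun w => by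
    simp only [hobj, Function.comp_apply, e, WithLp.equiv_symm_apply,
      EuclideanSpace.real_norm_sq_eq]
    ring
  have hcon' : con = (fun v => ‖T v - T (e w₀)‖ ^ 2 / 2) ∘ e := funext fun w => by
    simp only [hcon, hy, Function.comp_apply, e, WithLp.equiv_symm_apply, hT, PiLp.sub_apply,
      EuclideanSpace.real_norm_sq_eq]
    ring
  have hq' : q = dualFunction obj con := funext₂ hq
  have hbdd : ∀ ε, ∀ lam ≥ 0, BddBelow (range (lagrangian obj con ε lam)) := fun ε lam hlam =>
    bddBelow_range_lagrangian (fun w => by rw [hobj]; positivity)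
      (fun w => by rw [hcon]; positivity) hlam
  refine ⟨fun ε hε => ?_, fun M hM => ?_⟩
  · obtain ⟨w, lam, hsad⟩ := exists_isLagrangianSaddle_half_sq_norm T (T (e w₀)) hε
    replace hsad : IsLagrangianSaddle obj con ε (e.symm w) lam :=
      hobj' ▸ hcon' ▸ hsad.comp_equiv e
    have hpval : pval ε = obj (e.symm w) := (hp ε).trans hsad.isLeast_image.csInf_eq
    rw [hq', hpval]
    exact ⟨⟨_, hsad.feasible, fun w' hw' => hsad.isLeast_image.2 ⟨w', hw', rfl⟩⟩,
      hsad.isLUB_dualFunction (hbdd ε),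
      lam, hsad.nonneg, fun _ => hsad.dualFunction_le (hbdd ε), hsad.dualFunction_eq⟩
  · rw [hq', hobj', hcon']
    simp only [dualFunction_comp_equiv]
    exact exists_pos_forall_le_dual_maximizer T (by simpa [e] using hw₀) hM.le
end
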